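/- arXiv:2211.14251 — 2 statements merged into one kernel-verified Lean document; each statement's English description precedes it below -/
import Mathlib

section
/- Let U ⊆ ℝ² be a Jordan domain and K a continuum that intersects U but is not contained in U. Let K' = K ∩ cl(U). Then K' ∪ ∂U is connected. -/
/-!
The frontier of `U` lies in the Jordan curve `Γ` and is connected: `closure U` and `Uᶜ` are
connected closed sets covering the plane (every other component of `Γᶜ` has closure meeting the
connected set `Γ`), and the plane is unicoherent. Unicoherence holds in any simply connected normal
space: were `A ∩ B` split into closed pieces `P` and `Q`, an Urysohn function `u` (`0` on `P`, `1`
on `Q`) would give a circle-valued map equal to `exp (iπu)` on `A` and to `exp (-iπu)` on `B`; a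
real lift `θ` of it makes `θ - πu` constant on `A` and `θ + πu` constant on `B`, forcing `π = -π`.

By boundary bumping, unless `K ⊆ closure U`, every component of `K ∩ closure U` meets
`closure (K \ closure U) ⊆ Uᶜ`, hence meets `frontier U`; so every point of `K ∩ closure U` is
joined to the connected set `frontier U`.
-/

/-- A Jordan curve in the plane: a set homeomorphic to the unit circle. -/
def IsJordanCurve (Γ : Set (EuclideanSpace ℝ (Fin 2))) : Prop :=
  Nonempty (Γ ≃ₜ Metric.sphere (0 : EuclideanSpace ℝ (Fin 2)) 1)

/-- A Jordan domain: the bounded connected component of the complement of a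
Jordan curve. -/
def IsJordanDomain (U : Set (EuclideanSpace ℝ (Fin 2))) : Prop :=
  ∃ (Γ : Set (EuclideanSpace ℝ (Fin 2))) (z : EuclideanSpace ℝ (Fin 2)),
    IsJordanCurve Γ ∧ z ∈ Γᶜ ∧ U = connectedComponentIn Γᶜ z ∧ Bornology.IsBounded U

open Set

section

variable {X : Type*} [TopologicalSpace X]

theorem exists_lift_circleExp [SimplyConnectedSpace X] [LocallyPathConnectedSpace X]
    (f : C(X, Circle)) : ∃ θ : C(X, ℝ), ∀ x, Circle.exp (θ x) = f x := by
  obtain ⟨x₀⟩ : Nonempty X := inferInstance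
  obtain ⟨t₀, ht₀⟩ := Circle.exp_surjective (f x₀)
  obtain ⟨θ, -, hθ⟩ :=
    (Circle.isCoveringMap_exp.existsUnique_continuousMap_lifts f x₀ t₀ ht₀).exists
  exact ⟨θ, congrFun hθ⟩

theorem IsPreconnected.sub_eq_sub_of_circleExp_eq {s : Set X} (hs : IsPreconnected s)
    {θ φ : X → ℝ} (hθ : ContinuousOn θ s) (hφ : ContinuousOn φ s)
    (h : ∀ x ∈ s, Circle.exp (θ x) = Circle.exp (φ x)) {x y : X} (hx : x ∈ s) (hy : y ∈ s) :
    θ x - φ x = θ y - φ y := by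
  refine hs.constant_of_mapsTo (T := (AddSubgroup.zmultiples (2 * Real.pi) : Set ℝ))
    (SetLike.isDiscrete_iff_discreteTopology.mpr inferInstance) (hθ.sub hφ) ?_ hx hy
  intro z hz
  obtain ⟨m, hm⟩ := Circle.exp_eq_exp.mp (h z hz)
  exact ⟨m, by simp [hm]⟩

theorem IsPreconnected.inter_of_union_eq_univ [NormalSpace X]
    [SimplyConnectedSpace X] [LocallyPathConnectedSpace X] {A B : Set X}
    (hA' : IsPreconnected A) (hB' : IsPreconnected B) (hA : IsClosed A) (hB : IsClosed B)
    (hAB : A ∪ B = univ) : IsPreconnected (A ∩ B) := by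
  classical
  rw [isPreconnected_iff_subset_of_fully_disjoint_closed (hA.inter hB)]
  intro P Q hP hQ hPQ hdisj
  by_contra! hne
  simp only [not_subset] at hne
  obtain ⟨⟨q, hqAB, hqP⟩, ⟨p, hpAB, hpQ⟩⟩ := hne
  have hpP : p ∈ P := (hPQ hpAB).resolve_right hpQ
  have hqQ : q ∈ Q := (hPQ hqAB).resolve_left hqP
  obtain ⟨u, hu0, hu1, -⟩ := exists_continuous_zero_one_of_isClosed hP hQ hdisj
  have hu : Continuous fun x => Real.pi * u x := by fun_prop
  have hglue : ∀ x ∈ A ∩ B, Circle.exp (Real.pi * u x) = Circle.exp (-(Real.pi * u x)) := by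
    rintro x hx
    rcases hPQ hx with h | h
    · simp [hu0 h]
    · rw [hu1 h, Circle.exp_eq_exp]
      exact ⟨1, by simp; ring⟩
  let f : X → Circle := fun x =>
    if x ∈ A then Circle.exp (Real.pi * u x) else Circle.exp (-(Real.pi * u x))
  have hfA : ∀ x ∈ A, f x = Circle.exp (Real.pi * u x) := fun x hx => if_pos hx
  have hfB : ∀ x ∈ B, f x = Circle.exp (-(Real.pi * u x)) := by
    intro x hx
    by_cases hxA : x ∈ A
    · rw [hfA x hxA, hglue x ⟨hxA, hx⟩]
    · exact if_neg hxA
  have hf : Continuous f := by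
    rw [← continuousOn_univ, ← hAB]
    refine ContinuousOn.union_of_isClosed ?_ ?_ hA hB
    · exact (Circle.exp.continuous.comp hu).continuousOn.congr hfA
    · exact (Circle.exp.continuous.comp hu.neg).continuousOn.congr hfB
  obtain ⟨θ, hθ⟩ := exists_lift_circleExp ⟨f, hf⟩
  have onA := hA'.sub_eq_sub_of_circleExp_eq θ.continuous.continuousOn hu.continuousOn
    (fun x hx => (hθ x).trans (hfA x hx)) hpAB.1 hqAB.1
  have onB := hB'.sub_eq_sub_of_circleExp_eq (φ := fun x => -(Real.pi * u x))
    θ.continuous.continuousOn hu.neg.continuousOn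
    (fun x hx => (hθ x).trans (hfB x hx)) hpAB.2 hqAB.2
  simp only [hu0 hpP, hu1 hqQ, Pi.zero_apply, Pi.one_apply] at onA onB
  linarith [Real.pi_pos]

theorem frontier_connectedComponentIn_subset [LocallyConnectedSpace X] {O : Set X}
    (hO : IsOpen O) (x : X) : frontier (connectedComponentIn O x) ⊆ Oᶜ := by
  intro p hp hpO
  rw [hO.connectedComponentIn.frontier_eq] at hp
  obtain ⟨y, hyp, hyx⟩ := mem_closure_iff.mp hp.1 _ hO.connectedComponentIn
    (mem_connectedComponentIn hpO)
  refine hp.2 ?_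
  rw [connectedComponentIn_eq hyx, ← connectedComponentIn_eq hyp]
  exact mem_connectedComponentIn hpO

theorem isPreconnected_compl_connectedComponentIn [LocallyConnectedSpace X] [ConnectedSpace X]
    {Γ : Set X} (hΓ : IsClosed Γ) (hΓ' : IsPreconnected Γ) (z : X) :
    IsPreconnected (connectedComponentIn Γᶜ z)ᶜ := by
  set U := connectedComponentIn Γᶜ z
  have hΓU : Γ ⊆ Uᶜ := fun x hxΓ hxU => connectedComponentIn_subset _ _ hxU hxΓ
  rcases Γ.eq_empty_or_nonempty with rfl | ⟨x₀, hx₀⟩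
  · simp [U, connectedComponentIn_univ, isPreconnected_empty]
  refine isPreconnected_of_forall x₀ fun y hy => ?_
  by_cases hyΓ : y ∈ Γ
  · exact ⟨Γ, hΓU, hx₀, hyΓ, hΓ'⟩
  set W := connectedComponentIn Γᶜ y
  have hWy : y ∈ W := mem_connectedComponentIn hyΓ
  have hWU : Disjoint W U := disjoint_left.mpr fun a haW haU => hy <|
    (show U = W from (connectedComponentIn_eq haU).trans (connectedComponentIn_eq haW).symm) ▸ hWy
  have hfrW : (frontier W).Nonempty := nonempty_frontier_iff.mpr
    ⟨⟨y, hWy⟩, fun h => connectedComponentIn_subset Γᶜ y (eq_univ_iff_forall.mp h x₀) hx₀⟩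
  obtain ⟨p, hpW⟩ := hfrW
  have hpΓ : p ∈ Γ := by simpa using frontier_connectedComponentIn_subset hΓ.isOpen_compl y hpW
  refine ⟨Γ ∪ closure W, union_subset hΓU ?_, Or.inl hx₀, Or.inr (subset_closure hWy),
    hΓ'.union p hpΓ (frontier_subset_closure hpW) isPreconnected_connectedComponentIn.closure⟩
  exact subset_compl_iff_disjoint_right.mpr
    (hWU.closure_left hΓ.isOpen_compl.connectedComponentIn)

theorem isPreconnected_frontier_connectedComponentIn [NormalSpace X] [SimplyConnectedSpace X]
    [LocallyPathConnectedSpace X] {Γ : Set X} (hΓ : IsClosed Γ) (hΓ' : IsPreconnected Γ)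
    (z : X) : IsPreconnected (frontier (connectedComponentIn Γᶜ z)) := by
  have hU := hΓ.isOpen_compl.connectedComponentIn (x := z)
  rw [frontier_eq_closure_inter_closure, hU.isClosed_compl.closure_eq]
  exact isPreconnected_connectedComponentIn.closure.inter_of_union_eq_univ
    (isPreconnected_compl_connectedComponentIn hΓ hΓ' z) isClosed_closure hU.isClosed_compl
    (eq_univ_of_forall fun x => (em (x ∈ _)).imp (subset_closure ·) id)

theorem exists_isClopen_mem_disjoint_of_disjoint_connectedComponent [T2Space X] [CompactSpace X]
    {L : Set X} (hL : IsClosed L) {x : X} (hx : Disjoint (connectedComponent x) L) :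
    ∃ Z : Set X, IsClopen Z ∧ x ∈ Z ∧ Disjoint Z L := by
  rw [connectedComponent_eq_iInter_isClopen, disjoint_iff_inter_eq_empty, inter_comm] at hx
  obtain ⟨t, ht⟩ := hL.isCompact.elim_finite_subfamily_closed _
    (fun Z : {Z : Set X // IsClopen Z ∧ x ∈ Z} => Z.2.1.isClosed) hx
  refine ⟨⋂ Z ∈ t, Z.1, isClopen_biInter_finset fun Z _ => Z.2.1,
    mem_iInter₂.mpr fun Z _ => Z.2.2, ?_⟩
  rw [disjoint_iff_inter_eq_empty, inter_comm, ht]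

theorem IsCompact.connectedComponentIn_inter_closure_diff_nonempty [T2Space X] {K C : Set X}
    (hK : IsCompact K) (hK' : IsPreconnected K) (hC : IsClosed C) (hKC : (K \ C).Nonempty)
    {x : X} (hx : x ∈ K ∩ C) :
    (connectedComponentIn (K ∩ C) x ∩ closure (K \ C)).Nonempty := by
  rw [← not_disjoint_iff_nonempty_inter]
  intro h
  set L := closure (K \ C)
  have : CompactSpace ↥(K ∩ C) := isCompact_iff_compactSpace.mp (hK.inter_right hC)
  obtain ⟨Z, hZ, hxZ, hZL⟩ := exists_isClopen_mem_disjoint_of_disjoint_connectedComponent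
    (isClosed_closure.preimage continuous_subtype_val : IsClosed (((↑) : ↥(K ∩ C) → X) ⁻¹' L))
    (x := ⟨x, hx⟩) <| by
      rw [← disjoint_image_iff Subtype.val_injective, ← connectedComponentIn_eq_image hx,
        Subtype.image_preimage_coe]
      exact h.mono_right inter_subset_right
  have hclosed : ∀ {S : Set ↥(K ∩ C)}, IsClosed S → IsClosed (((↑) : ↥(K ∩ C) → X) '' S) :=
    fun hS => (hS.isCompact.image continuous_subtype_val).isClosed
  -- `Z` and the rest of `K` separate `K`: away from `closure (K \ C)`, the set `K` lies in `C`.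
  have hcover : K ⊆ (↑) '' Z ∪ (L ∪ (↑) '' Zᶜ) := by
    intro w hw
    by_cases hwC : w ∈ C
    · by_cases hwZ : (⟨w, hw, hwC⟩ : ↥(K ∩ C)) ∈ Z
      · exact Or.inl ⟨_, hwZ, rfl⟩
      · exact Or.inr (Or.inr ⟨_, hwZ, rfl⟩)
    · exact Or.inr (Or.inl (subset_closure ⟨hw, hwC⟩))
  have hdisj : Disjoint (((↑) : ↥(K ∩ C) → X) '' Z) (L ∪ (↑) '' Zᶜ) :=
    disjoint_union_right.mpr ⟨disjoint_image_left.mpr hZL,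
      (disjoint_image_iff Subtype.val_injective).mpr disjoint_compl_right⟩
  rcases (isPreconnected_iff_subset_of_fully_disjoint_closed hK.isClosed).mp hK' _ _
    (hclosed hZ.isClosed) (isClosed_closure.union (hclosed hZ.compl.isClosed)) hcover hdisj
    with hKZ | hKZ
  · obtain ⟨w, hwK, hwC⟩ := hKC
    obtain ⟨w', -, rfl⟩ := hKZ hwK
    exact hwC w'.2.2
  · exact disjoint_left.mp hdisj ⟨_, hxZ, rfl⟩ (hKZ hx.1)

theorem IsCompact.isConnected_inter_closure_union_frontier [T2Space X] {K U : Set X}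
    (hK : IsCompact K) (hK' : IsPreconnected K) (hU : IsOpen U) (hfr : IsPreconnected (frontier U))
    (hKU : (K ∩ U).Nonempty) (hKU' : ¬ K ⊆ U) : IsConnected (K ∩ closure U ∪ frontier U) := by
  rw [hU.frontier_eq] at hfr ⊢
  obtain ⟨w, hwK, hwcl, hwU⟩ : (K ∩ (closure U \ U)).Nonempty := by
    by_contra! h
    refine hKU' (hK'.subset_of_closure_inter_subset hU hKU ?_)
    rintro p ⟨hpcl, hpK⟩
    by_contra hpU
    exact h.subset ⟨hpK, hpcl, hpU⟩
  have hbridge : ∀ y ∈ K ∩ closure U, ∃ T ⊆ K ∩ closure U, y ∈ T ∧ IsPreconnected T ∧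
      (T ∩ (closure U \ U)).Nonempty := by
    intro y hy
    by_cases hKcl : K ⊆ closure U
    · exact ⟨K, subset_inter subset_rfl hKcl, hy.1, hK', w, hwK, hwcl, hwU⟩
    obtain ⟨v, hvT, hv⟩ := hK.connectedComponentIn_inter_closure_diff_nonempty hK'
      isClosed_closure (sdiff_nonempty.mpr hKcl) hy
    have hUv : Disjoint U (closure (K \ closure U)) :=
      ((disjoint_compl_right.mono_left subset_closure).mono_right
        (sdiff_subset_compl _ _)).closure_right hU
    exact ⟨_, connectedComponentIn_subset _ _, mem_connectedComponentIn hy,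
      isPreconnected_connectedComponentIn, v, hvT,
      (connectedComponentIn_subset _ _ hvT).2, disjoint_right.mp hUv hv⟩
  refine ⟨⟨w, Or.inr ⟨hwcl, hwU⟩⟩, isPreconnected_of_forall w ?_⟩
  rintro y (hy | hy)
  · obtain ⟨T, hTsub, hyT, hT, v, hvT, hvfr⟩ := hbridge y hy
    exact ⟨T ∪ (closure U \ U), union_subset_union_left _ hTsub, Or.inr ⟨hwcl, hwU⟩, Or.inl hyT,
      hT.union v hvT hvfr hfr⟩
  · exact ⟨closure U \ U, subset_union_right, ⟨hwcl, hwU⟩, hy, hfr⟩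

end

theorem IsJordanCurve.isCompact {Γ : Set (EuclideanSpace ℝ (Fin 2))} (h : IsJordanCurve Γ) :
    IsCompact Γ :=
  let ⟨e⟩ := h
  isCompact_iff_compactSpace.mpr e.symm.compactSpace

theorem IsJordanCurve.isConnected {Γ : Set (EuclideanSpace ℝ (Fin 2))} (h : IsJordanCurve Γ) :
    IsConnected Γ := by
  obtain ⟨e⟩ := h
  have : ConnectedSpace (Metric.sphere (0 : EuclideanSpace ℝ (Fin 2)) 1) :=
    isConnected_iff_connectedSpace.mp <| isConnected_sphere (by
      rw [← Module.finrank_eq_rank, finrank_euclideanSpace_fin]; norm_num) 0 zero_le_one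
  exact isConnected_iff_connectedSpace.mpr (e.symm.surjective.connectedSpace e.symm.continuous)

theorem stmt10 (U K : Set (EuclideanSpace ℝ (Fin 2))) (hU : IsJordanDomain U)
    (hKc : IsCompact K) (hKconn : IsConnected K)
    (hint : (K ∩ U).Nonempty) (hnotsub : ¬ K ⊆ U) :
    IsConnected ((K ∩ closure U) ∪ frontier U) := by
  obtain ⟨Γ, z, hΓ, -, rfl, -⟩ := hU
  exact hKc.isConnected_inter_closure_union_frontier hKconn.isPreconnected
    hΓ.isCompact.isClosed.isOpen_compl.connectedComponentIn
    (isPreconnected_frontier_connectedComponentIn hΓ.isCompact.isClosed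
      hΓ.isConnected.isPreconnected z) hint hnotsub
end

section
/- Let K ⊆ ℝᵈ be a compact connected set that is not locally connected (in the sense: there exists ε > 0 such that for every δ > 0 there are x, y ∈ K with dist(x,y) < δ that are not both contained in any connected compact subset of K of diameter < ε). Then there exist pairwise disjoint continua C_i ⊆ K (i ∈ ℕ) converging in Hausdorff distance to a nondegenerate continuum C ⊆ K, and an η > 0 such that any continuum in K meeting two distinct sets among {C_i} ∪ {C} has diameter at least η. -/
/-!
Let `ε` witness the failure of local connectedness, and let `p` be a point near which there are
arbitrarily close pairs of points not joined by any continuum in `K` of diameter `< ε`. Put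
`r = ε / 3` and `A = K ∩ closedBall p r`. Components of `A` have diameter `≤ 2r < ε`, so such pairs
lie in different components of `A`; as finitely many components of a compact set are at
positive distance from each other, infinitely many components of `A` meet `closedBall p (r / 4)`.
By boundary bumping, each of them contains a continuum in `closedBall p (r / 2)` of diameter
`≥ r / 4`, and a subsequence of these converges in the Hausdorff metric to a continuum, which is
nondegenerate. A continuum in `K` of diameter `< r / 2` meeting `closedBall p (r / 2)` stays in `A`,
hence in a single component of `A`; dropping the one component that may contain the limit gives
the separation with `η = r / 2`.
-/

open Filter Topology Metric

/-- Local connectivity of a compact set in the sense of Whyburn: any two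
sufficiently close points lie in a common small continuum inside the set. -/
def WhyburnLC {X : Type*} [MetricSpace X] (K : Set X) : Prop :=
  ∀ ε > (0 : ℝ), ∃ δ > (0 : ℝ), ∀ x ∈ K, ∀ y ∈ K, dist x y < δ →
    ∃ T : Set X, T ⊆ K ∧ IsCompact T ∧ IsConnected T ∧ x ∈ T ∧ y ∈ T ∧
      Metric.diam T < ε

open Set Function Bornology

theorem Set.Infinite.exists_seq_injective_comp {α β : Type*} {f : α → β} {s : Set α}
    (h : (f '' s).Infinite) : ∃ z : ℕ → α, (∀ n, z n ∈ s) ∧ Injective (f ∘ z) := by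
  choose z hz hfz using fun n => (h.natEmbedding _ n).2
  refine ⟨z, hz, fun m n hmn => (h.natEmbedding _).injective (Subtype.ext ?_)⟩
  exact (hfz m).symm.trans (hmn.trans (hfz n))

section Components

variable {α : Type*} [TopologicalSpace α]

theorem isCompact_connectedComponentIn {s : Set α} (hs : IsCompact s) (x : α) :
    IsCompact (connectedComponentIn s x) := by
  by_cases hx : x ∈ s
  · have := isCompact_iff_compactSpace.mp hs
    rw [connectedComponentIn_eq_image hx]
    exact isClosed_connectedComponent.isCompact.image continuous_subtype_val
  · rw [connectedComponentIn_eq_empty hx]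
    exact isCompact_empty

theorem connectedComponentIn_disjoint {F : Set α} {x y : α}
    (h : connectedComponentIn F x ≠ connectedComponentIn F y) :
    Disjoint (connectedComponentIn F x) (connectedComponentIn F y) :=
  Set.disjoint_left.2 fun _ hx hy =>
    h ((connectedComponentIn_eq hx).trans (connectedComponentIn_eq hy).symm)

theorem exists_isClopen_of_disjoint_connectedComponent [CompactSpace α] [T2Space α] {x : α}
    {S : Set α} (hS : IsClosed S) (hxS : Disjoint (connectedComponent x) S) :
    ∃ U, IsClopen U ∧ x ∈ U ∧ Disjoint U S := by
  rw [connectedComponent_eq_iInter_isClopen, disjoint_iff_inter_eq_empty, inter_comm] at hxS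
  obtain ⟨t, ht⟩ := hS.isCompact.elim_finite_subfamily_closed _ (fun U => U.2.1.isClosed) hxS
  refine ⟨⋂ U ∈ t, U.1, isClopen_biInter_finset fun U _ => U.2.1,
    mem_iInter₂.2 fun U _ => U.2.2, ?_⟩
  rw [disjoint_iff_inter_eq_empty, inter_comm]
  exact ht

/-- Boundary bumping: otherwise a clopen piece of the compact space `s ∩ F` around `z` avoids
`frontier F`, hence is also open in `s`, and disconnects `s`. -/
theorem IsCompact.connectedComponentIn_inter_frontier_nonempty [T2Space α] {s F : Set α}
    (hs : IsCompact s) (hs' : IsPreconnected s) (hF : IsClosed F) {z q : α} (hz : z ∈ s ∩ F)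
    (hq : q ∈ s \ F) : (connectedComponentIn (s ∩ F) z ∩ frontier F).Nonempty := by
  rw [← not_disjoint_iff_nonempty_inter]
  intro hdisj
  have := isCompact_iff_compactSpace.mp (hs.inter_right hF)
  obtain ⟨U, hU, hzU, hUF⟩ := exists_isClopen_of_disjoint_connectedComponent (x := ⟨z, hz⟩)
    (isClosed_frontier.preimage continuous_subtype_val) <| by
      rw [connectedComponentIn_eq_image hz] at hdisj
      exact (disjoint_image_iff Subtype.val_injective).1
        (hdisj.mono_right (image_preimage_subset _ _))
  obtain ⟨O, hO, rfl⟩ := isOpen_induced_iff.mp hU.isOpen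
  set V : Set α := (↑) '' ((↑) ⁻¹' O : Set ↥(s ∩ F))
  have hVcl : IsClosed V := (hU.isClosed.isCompact.image continuous_subtype_val).isClosed
  have hcover : s ⊆ (O ∩ interior F) ∪ Vᶜ := by
    rintro x hx
    by_cases hxV : x ∈ V
    · obtain ⟨⟨x, hxF⟩, hxO, rfl⟩ := hxV
      refine .inl ⟨hxO, by_contra fun hint => ?_⟩
      exact disjoint_left.1 hUF hxO ⟨subset_closure hxF.2, hint⟩
    · exact .inr hxV
  have hsep : s ∩ ((O ∩ interior F) ∩ Vᶜ) = ∅ :=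
    eq_empty_of_forall_notMem fun x ⟨hx, ⟨hxO, hxF⟩, hxV⟩ =>
      hxV ⟨⟨x, hx, interior_subset hxF⟩, hxO, rfl⟩
  rcases isPreconnected_iff_subset_of_disjoint.1 hs' _ _ (hO.inter isOpen_interior)
    hVcl.isOpen_compl hcover hsep with h | h
  · exact hq.2 (interior_subset (h hq.1).2)
  · exact h hz.1 ⟨⟨z, hz⟩, hzU, rfl⟩

end Components

section Metric

variable {E : Type*} [MetricSpace E]

theorem IsCompact.sub_dist_le_diam_connectedComponentIn {K : Set E} (hK : IsCompact K)
    (hK' : IsPreconnected K) {p z q : E} {r : ℝ} (hz : z ∈ K) (hzp : dist z p ≤ r) (hq : q ∈ K)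
    (hqp : r < dist q p) : r - dist z p ≤ diam (connectedComponentIn (K ∩ closedBall p r) z) := by
  obtain ⟨w, hw, hwr⟩ := hK.connectedComponentIn_inter_frontier_nonempty hK' isClosed_closedBall
    ⟨hz, hzp⟩ ⟨hq, hqp.not_ge⟩
  have hzw : dist w z ≤ diam (connectedComponentIn (K ∩ closedBall p r) z) :=
    dist_le_diam_of_mem
      (isCompact_connectedComponentIn (hK.inter_right isClosed_closedBall) z).isBounded
      hw (mem_connectedComponentIn ⟨hz, hzp⟩)
  have hwp : dist w p = r := frontier_closedBall_subset_sphere hwr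
  linarith [dist_triangle w z p]

theorem exists_pos_connectedComponentIn_eq_of_finite {A S : Set E} (hA : IsCompact A)
    (hSA : S ⊆ A) (hfin : (connectedComponentIn A '' S).Finite) :
    ∃ δ > 0, ∀ x ∈ S, ∀ y ∈ S, dist x y < δ →
      connectedComponentIn A x = connectedComponentIn A y := by
  have hsep : ∀ G ∈ (connectedComponentIn A '' S) ×ˢ (connectedComponentIn A '' S),
      ∀ᶠ δ in 𝓝[>] (0 : ℝ), G.1 = G.2 ∨ Disjoint (thickening δ G.1) (thickening δ G.2) := by
    rintro ⟨_, _⟩ ⟨⟨x, -, rfl⟩, ⟨y, -, rfl⟩⟩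
    by_cases h : connectedComponentIn A x = connectedComponentIn A y
    · exact .of_forall fun _ => .inl h
    obtain ⟨δ, hδ, hdisj⟩ := (connectedComponentIn_disjoint h).exists_thickenings
      (isCompact_connectedComponentIn hA x) (isCompact_connectedComponentIn hA y).isClosed
    filter_upwards [Ioo_mem_nhdsGT hδ] with ε hε
    exact .inr (hdisj.mono (thickening_mono hε.2.le _) (thickening_mono hε.2.le _))
  obtain ⟨δ, hδ, hδpos⟩ :=
    (((hfin.prod hfin).eventually_all).2 hsep |>.and self_mem_nhdsWithin).exists
  refine ⟨δ, hδpos, fun x hx y hy hxy => ?_⟩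
  refine (hδ (_, _) ⟨mem_image_of_mem _ hx, mem_image_of_mem _ hy⟩).resolve_right fun hdisj => ?_
  exact disjoint_left.1 hdisj
    (mem_thickening_iff.2 ⟨x, mem_connectedComponentIn (hSA hx), by rwa [dist_comm]⟩)
    (self_subset_thickening hδpos _ (mem_connectedComponentIn (hSA hy)))

theorem IsCompact.exists_subseq_tendsto_hausdorffDist {Q : Set E} (hQ : IsCompact Q)
    {s : ℕ → Set E} (hs : ∀ n, IsClosed (s n)) (hne : ∀ n, (s n).Nonempty) (hsQ : ∀ n, s n ⊆ Q) :
    ∃ L ⊆ Q, IsCompact L ∧ L.Nonempty ∧ ∃ φ : ℕ → ℕ, StrictMono φ ∧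
      Tendsto (fun n => hausdorffDist (s (φ n)) L) atTop (𝓝 0) := by
  have := isCompact_iff_compactSpace.mp hQ
  let t : ℕ → TopologicalSpace.NonemptyCompacts Q := fun n =>
    ⟨⟨(↑) ⁻¹' s n, ((hs n).preimage continuous_subtype_val).isCompact⟩,
      by obtain ⟨x, hx⟩ := hne n; exact ⟨⟨x, hsQ n hx⟩, hx⟩⟩
  obtain ⟨L, φ, hφ, hL⟩ := CompactSpace.tendsto_subseq t
  refine ⟨(↑) '' (L : Set Q), Subtype.coe_image_subset _ _,
    L.isCompact.image continuous_subtype_val, L.nonempty.image _, φ, hφ, ?_⟩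
  have hdist : ∀ n, hausdorffDist (s n) ((↑) '' (L : Set Q)) = dist (t n) L := fun n => by
    rw [NonemptyCompacts.dist_eq, ← hausdorffDist_image (isometry_subtype_coe (s := Q))]
    simp [t, Subtype.image_preimage_coe, inter_eq_right.2 (hsQ n)]
  exact (tendsto_iff_dist_tendsto_zero.mp hL).congr fun n => (hdist (φ n)).symm

theorem isPreconnected_of_tendsto_hausdorffDist {s : ℕ → Set E} {L : Set E}
    (hs : ∀ n, IsPreconnected (s n)) (hne : ∀ n, (s n).Nonempty) (hb : ∀ n, IsBounded (s n))
    (hL : IsCompact L) (hLne : L.Nonempty)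
    (h : Tendsto (fun n => hausdorffDist (s n) L) atTop (𝓝 0)) : IsPreconnected L := by
  refine isPreconnected_closed_iff.2 fun t t' ht ht' hLtt' hLt hLt' => ?_
  by_contra hempty
  have hdisj : Disjoint (L ∩ t) (L ∩ t') := by
    rw [disjoint_iff_inter_eq_empty, ← not_nonempty_iff_eq_empty]
    rintro ⟨x, ⟨hxL, hxt⟩, -, hxt'⟩
    exact hempty ⟨x, hxL, hxt, hxt'⟩
  obtain ⟨δ, hδ, hthick⟩ :=
    hdisj.exists_thickenings (hL.inter_right ht) (hL.isClosed.inter ht')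
  obtain ⟨n, hn⟩ := (h.eventually (gt_mem_nhds hδ)).exists
  have hfin := hausdorffEDist_ne_top_of_nonempty_of_bounded (hne n) hLne (hb n) hL.isBounded
  have hmeet : ∀ u ⊆ L, u.Nonempty → (s n ∩ thickening δ u).Nonempty := fun u hu ⟨x, hx⟩ =>
    let ⟨y, hy, hxy⟩ := exists_dist_lt_of_hausdorffDist_lt' (hu hx) hn hfin
    ⟨y, hy, mem_thickening_iff.2 ⟨x, hx, hxy⟩⟩
  have hcover : s n ⊆ thickening δ (L ∩ t) ∪ thickening δ (L ∩ t') := fun y hy => by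
    obtain ⟨x, hx, hxy⟩ := exists_dist_lt_of_hausdorffDist_lt hy hn hfin
    rcases hLtt' hx with hxt | hxt'
    exacts [.inl (mem_thickening_iff.2 ⟨x, ⟨hx, hxt⟩, hxy⟩),
      .inr (mem_thickening_iff.2 ⟨x, ⟨hx, hxt'⟩, hxy⟩)]
  obtain ⟨y, -, hyt, hyt'⟩ := hs n _ _ isOpen_thickening isOpen_thickening hcover
    (hmeet _ inter_subset_left hLt) (hmeet _ inter_subset_left hLt')
  exact disjoint_left.1 hthick hyt hyt'

theorem nontrivial_of_tendsto_hausdorffDist {s : ℕ → Set E} {L : Set E} {c : ℝ} (hc : 0 < c)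
    (hdiam : ∀ n, c ≤ diam (s n)) (hLne : L.Nonempty)
    (h : Tendsto (fun n => hausdorffDist (s n) L) atTop (𝓝 0)) : L.Nontrivial := by
  refine hLne.exists_eq_singleton_or_nontrivial.resolve_left ?_
  rintro ⟨a, rfl⟩
  obtain ⟨n, hn⟩ := (h.eventually (gt_mem_nhds (half_pos hc))).exists
  have hb : IsBounded (s n) := by_contra fun hb => by
    linarith [hdiam n, diam_eq_zero_of_unbounded hb]
  have hsne : (s n).Nonempty := nonempty_iff_ne_empty.2 fun he => by
    linarith [hdiam n, he ▸ diam_empty (α := E)]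
  have hfin := hausdorffEDist_ne_top_of_nonempty_of_bounded hsne (singleton_nonempty a) hb
    isBounded_singleton
  have hclose : ∀ x ∈ s n, dist x a ≤ hausdorffDist (s n) {a} := fun x hx => by
    simpa using infDist_le_hausdorffDist_of_mem hx hfin
  have := diam_le_of_forall_dist_le (add_nonneg hausdorffDist_nonneg hausdorffDist_nonneg)
    fun x hx y hy => (dist_triangle_right x y a).trans (add_le_add (hclose x hx) (hclose y hy))
  linarith [hdiam n]

theorem IsCompact.exists_subseq_tendsto_hausdorffDist_nontrivial_continuum {Q : Set E}
    (hQ : IsCompact Q) {s : ℕ → Set E} (hs : ∀ n, IsCompact (s n)) (hsc : ∀ n, IsConnected (s n))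
    (hsQ : ∀ n, s n ⊆ Q) {c : ℝ} (hc : 0 < c) (hdiam : ∀ n, c ≤ diam (s n)) :
    ∃ L ⊆ Q, IsCompact L ∧ IsConnected L ∧ L.Nontrivial ∧ ∃ φ : ℕ → ℕ, StrictMono φ ∧
      Tendsto (fun n => hausdorffDist (s (φ n)) L) atTop (𝓝 0) := by
  obtain ⟨L, hLQ, hL, hLne, φ, hφ, hlim⟩ := hQ.exists_subseq_tendsto_hausdorffDist
    (fun n => (hs n).isClosed) (fun n => (hsc n).nonempty) hsQ
  refine ⟨L, hLQ, hL, ⟨hLne, ?_⟩,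
    nontrivial_of_tendsto_hausdorffDist hc (fun n => hdiam (φ n)) hLne hlim, φ, hφ, hlim⟩
  exact isPreconnected_of_tendsto_hausdorffDist (fun n => (hsc (φ n)).isPreconnected)
    (fun n => (hsc (φ n)).nonempty) (fun n => (hs (φ n)).isBounded) hL hLne hlim

def ContinuumSeparated (K : Set E) (ε : ℝ) (x y : E) : Prop :=
  ∀ T ⊆ K, IsCompact T → IsConnected T → x ∈ T → y ∈ T → ε ≤ diam T

theorem exists_continuumSeparated_near_of_not_whyburnLC {K : Set E} (hK : IsCompact K)
    (h : ¬ WhyburnLC K) : ∃ ε > 0, ∃ p : E, ∀ δ > 0,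
      ∃ x ∈ K, ∃ y ∈ K, dist x p < δ ∧ dist y p < δ ∧ ContinuumSeparated K ε x y := by
  unfold WhyburnLC at h
  push Not at h
  obtain ⟨ε, hε, hsep⟩ := h
  choose x hx y hy hxy hxysep using fun n : ℕ => hsep (1 / (n + 1)) Nat.one_div_pos_of_nat
  obtain ⟨p, -, φ, hφ, hxp⟩ := hK.tendsto_subseq hx
  refine ⟨ε, hε, p, fun δ hδ => ?_⟩
  have hnear : ∀ᶠ n in atTop, dist (x (φ n)) p < δ / 2 :=
    (tendsto_iff_dist_tendsto_zero.1 hxp).eventually (gt_mem_nhds (half_pos hδ))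
  have hclose : ∀ᶠ n in atTop, 1 / ((φ n : ℝ) + 1) < δ / 2 :=
    (tendsto_one_div_add_atTop_nhds_zero_nat.comp hφ.tendsto_atTop).eventually
      (gt_mem_nhds (half_pos hδ))
  obtain ⟨n, hnear, hclose⟩ := (hnear.and hclose).exists
  refine ⟨x (φ n), hx _, y (φ n), hy _, by linarith, ?_, hxysep _⟩
  linarith [dist_triangle_left (y (φ n)) p (x (φ n)), hxy (φ n)]

theorem infinite_image_connectedComponentIn {K : Set E} (hK : IsCompact K) {p : E} {ε r ρ : ℝ}
    (hr : 2 * r < ε) (hρ : 0 < ρ) (hρr : ρ ≤ r)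
    (hsep : ∀ δ > 0,
      ∃ x ∈ K, ∃ y ∈ K, dist x p < δ ∧ dist y p < δ ∧ ContinuumSeparated K ε x y) :
    (connectedComponentIn (K ∩ closedBall p r) '' (K ∩ closedBall p ρ)).Infinite := by
  intro hfin
  have hSA : K ∩ closedBall p ρ ⊆ K ∩ closedBall p r :=
    inter_subset_inter_right _ (closedBall_subset_closedBall hρr)
  obtain ⟨δ, hδ, hcomp⟩ := exists_pos_connectedComponentIn_eq_of_finite
    (hK.inter_right isClosed_closedBall) hSA hfin
  obtain ⟨x, hx, y, hy, hxp, hyp, hxy⟩ := hsep (min (δ / 2) ρ) (by positivity)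
  have hxS : x ∈ K ∩ closedBall p ρ := ⟨hx, (hxp.trans_le (min_le_right _ _)).le⟩
  have hyS : y ∈ K ∩ closedBall p ρ := ⟨hy, (hyp.trans_le (min_le_right _ _)).le⟩
  have hxy_eq := hcomp x hxS y hyS <| by
    linarith [dist_triangle_right x y p, min_le_left (δ / 2) ρ]
  have hsmall : diam (connectedComponentIn (K ∩ closedBall p r) x) ≤ 2 * r :=
    (diam_mono ((connectedComponentIn_subset _ _).trans inter_subset_right)
      isBounded_closedBall).trans (diam_closedBall (hρ.le.trans hρr))
  have hlarge := hxy _ ((connectedComponentIn_subset _ _).trans inter_subset_left)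
    (isCompact_connectedComponentIn (hK.inter_right isClosed_closedBall) x)
    (isConnected_connectedComponentIn_iff.2 (hSA hxS)) (mem_connectedComponentIn (hSA hxS))
    (hxy_eq ▸ mem_connectedComponentIn (hSA hyS))
  linarith

theorem le_diam_of_connectedComponentIn_ne {K T : Set E} {p s t : E} {r : ℝ} (hTK : T ⊆ K)
    (hT : IsPreconnected T) (hTb : IsBounded T) (hs : s ∈ T) (ht : t ∈ T) (hsp : dist s p ≤ r / 2)
    (hst : connectedComponentIn (K ∩ closedBall p r) s ≠
      connectedComponentIn (K ∩ closedBall p r) t) :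
    r / 2 ≤ diam T := by
  by_contra! hTd
  have hTA : T ⊆ K ∩ closedBall p r := fun x hx =>
    ⟨hTK hx, mem_closedBall.2 (by linarith [dist_triangle x s p, dist_le_diam_of_mem hTb hx hs])⟩
  exact hst (connectedComponentIn_eq (hT.subset_connectedComponentIn hs hTA ht))

theorem exists_separated_continua {K : Set E} (hK : IsCompact K)
    (hK' : IsPreconnected K) {p q : E} {r : ℝ} (hr : 0 < r) (hq : q ∈ K) (hqp : r < dist q p)
    {z : ℕ → E} (hz : ∀ k, z k ∈ K ∩ closedBall p (r / 4))
    (hinj : Injective fun k => connectedComponentIn (K ∩ closedBall p r) (z k)) :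
    ∃ (C : ℕ → Set E) (Clim : Set E),
      (∀ i, C i ⊆ K ∧ IsCompact (C i) ∧ IsConnected (C i)) ∧
      (∀ i j, i ≠ j → Disjoint (C i) (C j)) ∧
      Clim ⊆ K ∧ IsCompact Clim ∧ IsConnected Clim ∧
      Clim.Nontrivial ∧
      Tendsto (fun n => hausdorffDist (C n) Clim) atTop (𝓝 0) ∧
      (∀ T : Set E, T ⊆ K → IsCompact T → IsConnected T →
        ((∃ i j, i ≠ j ∧ (T ∩ C i).Nonempty ∧ (T ∩ C j).Nonempty) ∨
          (∃ i, (T ∩ C i).Nonempty ∧ (T ∩ Clim).Nonempty)) →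
        r / 2 ≤ diam T) := by
  set A := K ∩ closedBall p r
  set G := fun k => connectedComponentIn A (z k)
  set D := fun k => connectedComponentIn (K ∩ closedBall p (r / 2)) (z k)
  have hzD : ∀ k, z k ∈ K ∩ closedBall p (r / 2) := fun k =>
    ⟨(hz k).1, mem_closedBall.2 (by linarith [mem_closedBall.1 (hz k).2])⟩
  have hDG : ∀ k, D k ⊆ G k := fun k => connectedComponentIn_mono _
    (inter_subset_inter_right _ (closedBall_subset_closedBall (by linarith)))
  have hDc : ∀ k, IsCompact (D k) := fun k =>
    isCompact_connectedComponentIn (hK.inter_right isClosed_closedBall) _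
  have hDconn : ∀ k, IsConnected (D k) := fun k => isConnected_connectedComponentIn_iff.2 (hzD k)
  have hDdiam : ∀ k, r / 4 ≤ diam (D k) := fun k => by
    linarith [mem_closedBall.1 (hz k).2, hK.sub_dist_le_diam_connectedComponentIn hK' (hz k).1
      (hzD k).2 hq (by linarith : r / 2 < dist q p)]
  obtain ⟨L, hLQ, hLc, hLconn, hLnt, ψ, hψ, hlim⟩ :=
    (hK.inter_right isClosed_closedBall).exists_subseq_tendsto_hausdorffDist_nontrivial_continuum
      hDc hDconn (fun k => connectedComponentIn_subset _ _) (by positivity) hDdiam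
  obtain ⟨w, hw⟩ := hLconn.nonempty
  have hLA : L ⊆ A :=
    hLQ.trans (inter_subset_inter_right _ (closedBall_subset_closedBall (by linarith)))
  have hLG : ∀ t ∈ L, connectedComponentIn A t = connectedComponentIn A w := fun t ht =>
    (connectedComponentIn_eq (hLconn.2.subset_connectedComponentIn hw hLA ht)).symm
  -- By injectivity of `G`, at most one `G (ψ k)` contains the limit continuum; skip it.
  obtain ⟨σ, hσ, hσL⟩ :=
    extraction_of_eventually_atTop (P := fun k => G (ψ k) ≠ connectedComponentIn A w)
      (Nat.cofinite_eq_atTop ▸ (hinj.comp hψ.injective).tendsto_cofinite.eventually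
        (eventually_cofinite_ne _))
  have hGinj : Injective (G ∘ ψ ∘ σ) := hinj.comp (hψ.comp hσ).injective
  have hDcomp : ∀ k, ∀ s ∈ D k, connectedComponentIn A s = G k := fun k s hs =>
    (connectedComponentIn_eq (hDG k hs)).symm
  refine ⟨fun i => D (ψ (σ i)), L,
    fun i => ⟨(connectedComponentIn_subset _ _).trans inter_subset_left, hDc _, hDconn _⟩,
    fun i j hij => ?_, hLQ.trans inter_subset_left, hLc, hLconn, hLnt,
    hlim.comp hσ.tendsto_atTop, ?_⟩
  · exact (connectedComponentIn_disjoint (hGinj.ne hij)).mono (hDG _) (hDG _)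
  rintro T hTK hTc hTconn
    (⟨i, j, hij, ⟨s, hsT, hs⟩, ⟨t, htT, ht⟩⟩ | ⟨i, ⟨s, hsT, hs⟩, ⟨t, htT, ht⟩⟩)
  all_goals
    refine le_diam_of_connectedComponentIn_ne hTK hTconn.2 hTc.isBounded hsT htT
      (mem_closedBall.1 (connectedComponentIn_subset _ _ hs).2) ?_
  · rw [hDcomp _ s hs, hDcomp _ t ht]
    exact hGinj.ne hij
  · rw [hDcomp _ s hs, hLG t ht]
    exact hσL i

end Metric

theorem stmt14 {d : ℕ} (K : Set (EuclideanSpace ℝ (Fin d)))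
    (hKc : IsCompact K) (hKconn : IsConnected K) (hnlc : ¬ WhyburnLC K) :
    ∃ (C : ℕ → Set (EuclideanSpace ℝ (Fin d)))
      (Clim : Set (EuclideanSpace ℝ (Fin d))) (η : ℝ),
      0 < η ∧
      (∀ i, C i ⊆ K ∧ IsCompact (C i) ∧ IsConnected (C i)) ∧
      (∀ i j, i ≠ j → Disjoint (C i) (C j)) ∧
      Clim ⊆ K ∧ IsCompact Clim ∧ IsConnected Clim ∧
      (∃ a ∈ Clim, ∃ b ∈ Clim, a ≠ b) ∧
      Tendsto (fun n => hausdorffDist (C n) Clim) atTop (𝓝 0) ∧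
      (∀ T : Set (EuclideanSpace ℝ (Fin d)), T ⊆ K → IsCompact T → IsConnected T →
        ((∃ i j, i ≠ j ∧ (T ∩ C i).Nonempty ∧ (T ∩ C j).Nonempty) ∨
          (∃ i, (T ∩ C i).Nonempty ∧ (T ∩ Clim).Nonempty)) →
        η ≤ Metric.diam T) := by
  obtain ⟨ε, hε, p, hsep⟩ := exists_continuumSeparated_near_of_not_whyburnLC hKc hnlc
  set r := ε / 3 with hrε
  have hr : 0 < r := by positivity
  obtain ⟨q, hq, hqp⟩ : ∃ q ∈ K, r < dist q p := by
    by_contra! hKr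
    obtain ⟨x, hx, y, hy, -, -, hxy⟩ := hsep 1 one_pos
    linarith [hrε, hxy K subset_rfl hKc hKconn hx hy,
      (diam_mono hKr isBounded_closedBall).trans (diam_closedBall hr.le)]
  obtain ⟨z, hz, hzinj⟩ := (infinite_image_connectedComponentIn hKc
    (by linarith [hrε] : 2 * r < ε) (by positivity : 0 < r / 4) (by linarith) hsep
    ).exists_seq_injective_comp
  obtain ⟨C, Clim, hC⟩ := exists_separated_continua hKc hKconn.isPreconnected hr hq hqp hz hzinj
  exact ⟨C, Clim, r / 2, by positivity, hC⟩
end
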